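/- arXiv:1603.06277 — 6 statements merged into one kernel-verified Lean document; each statement's English description precedes it below -/
import Mathlib

section
/- For a σ-finite measure ν on a measurable space X and a statistic t : X → ℝ^n, define Z(η) = ∫_X exp⟨η, t(x)⟩ dν(x) and H = {η : Z(η) < ∞}, and assume Z(η) > 0 on H. If η lies in the interior of H, then log Z is differentiable at η and its gradient equals the expected sufficient statistic: ∇ log Z(η) = ∫_X t(x) · exp(⟨η, t(x)⟩ − log Z(η)) dν(x). -/
open MeasureTheory Filter Topology
open scoped RealInnerProductSpace

/-!
Differentiation under the integral sign. The work is a dominating function for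
`‖t‖ exp ⟪θ, t⟫` uniformly for `θ` near `η`. For an orthonormal basis `b`,
`‖y‖ ≤ ∑ |⟪bᵢ, y⟫|`, so `exp (c ‖y‖)` is at most the sum of `exp ⟪c v, y⟫` over the `2ⁿ` cube
vertices `v = ∑ ±bᵢ`. Hence `exp (⟪η, y⟫ + c ‖y‖)` is integrable once every `η + c v` lies in `H`,
which holds for small `c > 0` because `η` is interior; and `‖y‖ exp ⟪θ, y⟫` is bounded by a
multiple of it for `‖θ - η‖ ≤ c / 2`. The chain rule for `log` finishes.
-/

theorem HasGradientAt.log {F : Type*} [NormedAddCommGroup F] [InnerProductSpace ℝ F]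
    [CompleteSpace F] {f : F → ℝ} {f' x : F} (hf : HasGradientAt f f' x) (hx : f x ≠ 0) :
    HasGradientAt (fun y => Real.log (f y)) ((f x)⁻¹ • f') x := by
  rw [hasGradientAt_iff_hasFDerivAt] at hf ⊢
  simpa using hf.log hx

theorem Real.exp_sum_abs_le_sum_exp {ι : Type*} [Fintype ι] [DecidableEq ι] (a : ι → ℝ) :
    exp (∑ i, |a i|) ≤ ∑ s : ι → Bool, exp (∑ i, if s i then a i else -a i) := by
  calc exp (∑ i, |a i|) = ∏ i, exp |a i| := exp_sum _ _
    _ ≤ ∏ i, ∑ b : Bool, exp (if b then a i else -a i) := by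
      gcongr with i
      simpa using exp_abs_le (a i)
    _ = ∑ s : ι → Bool, exp (∑ i, if s i then a i else -a i) := by
      simp only [Fintype.prod_sum, exp_sum]

namespace OrthonormalBasis

variable {ι E : Type*} [Fintype ι] [NormedAddCommGroup E] [InnerProductSpace ℝ E]
  (b : OrthonormalBasis ι ℝ E)

theorem norm_le_sum_abs_inner (x : E) : ‖x‖ ≤ ∑ i, |⟪b i, x⟫| :=
  calc ‖x‖ = ‖∑ i, ⟪b i, x⟫ • b i‖ := by rw [b.sum_repr']
    _ ≤ ∑ i, ‖⟪b i, x⟫ • b i‖ := norm_sum_le _ _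
    _ = ∑ i, |⟪b i, x⟫| := by simp [norm_smul]

noncomputable def cubeVertex (s : ι → Bool) : E := ∑ i, if s i then b i else -b i

theorem inner_cubeVertex (s : ι → Bool) (x : E) :
    ⟪b.cubeVertex s, x⟫ = ∑ i, if s i then ⟪b i, x⟫ else -⟪b i, x⟫ := by
  simp only [cubeVertex, sum_inner, apply_ite (⟪·, x⟫), inner_neg_left]

variable [DecidableEq ι]

theorem exp_norm_le_sum_exp_inner_cubeVertex (x : E) :
    Real.exp ‖x‖ ≤ ∑ s, Real.exp ⟪b.cubeVertex s, x⟫ := by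
  simp only [inner_cubeVertex]
  exact (Real.exp_le_exp.2 (b.norm_le_sum_abs_inner x)).trans (Real.exp_sum_abs_le_sum_exp _)

theorem exp_inner_add_mul_norm_le {c : ℝ} (hc : 0 ≤ c) (η x : E) :
    Real.exp (⟪η, x⟫ + c * ‖x‖) ≤ ∑ s, Real.exp ⟪η + c • b.cubeVertex s, x⟫ := by
  have h := b.exp_norm_le_sum_exp_inner_cubeVertex (c • x)
  simp only [norm_smul, Real.norm_of_nonneg hc, inner_smul_right] at h
  simp only [inner_add_left, inner_smul_left, Real.exp_add, ← Finset.mul_sum, RCLike.conj_to_real]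
  gcongr

end OrthonormalBasis

theorem Real.exp_inner_mul_norm_le {E : Type*} [NormedAddCommGroup E] [InnerProductSpace ℝ E]
    {η θ : E} {c : ℝ} (hc : 0 < c) (hθ : ‖θ - η‖ ≤ c / 2) (x : E) :
    exp ⟪θ, x⟫ * ‖x‖ ≤ 2 / c * exp (⟪η, x⟫ + c * ‖x‖) := by
  have hinner : ⟪θ, x⟫ ≤ ⟪η, x⟫ + c / 2 * ‖x‖ := by
    have := (real_inner_le_norm (θ - η) x).trans (mul_le_mul_of_nonneg_right hθ (norm_nonneg x))
    rw [inner_sub_left] at this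
    linarith
  have hnorm : ‖x‖ ≤ 2 / c * exp (c / 2 * ‖x‖) := by
    rw [div_mul_eq_mul_div, le_div_iff₀ hc]
    linarith [add_one_le_exp (c / 2 * ‖x‖)]
  calc exp ⟪θ, x⟫ * ‖x‖ ≤ exp (⟪η, x⟫ + c / 2 * ‖x‖) * (2 / c * exp (c / 2 * ‖x‖)) :=
        mul_le_mul (exp_le_exp.2 hinner) hnorm (norm_nonneg x) (exp_pos _).le
    _ = 2 / c * exp (⟪η, x⟫ + c * ‖x‖) := by
        rw [mul_left_comm, ← exp_add]
        ring_nf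

theorem hasGradientAt_exp_inner {E : Type*} [NormedAddCommGroup E] [InnerProductSpace ℝ E]
    [CompleteSpace E] (θ x : E) :
    HasGradientAt (fun θ' => Real.exp ⟪θ', x⟫) (Real.exp ⟪θ, x⟫ • x) θ := by
  have hinner : HasFDerivAt (fun θ' => ⟪θ', x⟫) (InnerProductSpace.toDual ℝ E x) θ := by
    rw [show (fun θ' => ⟪θ', x⟫) = InnerProductSpace.toDual ℝ E x from
      funext fun θ' => real_inner_comm x θ']
    exact (InnerProductSpace.toDual ℝ E x).hasFDerivAt
  rw [hasGradientAt_iff_hasFDerivAt, map_smulₛₗ, RCLike.conj_to_real]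
  exact (Real.hasDerivAt_exp _).comp_hasFDerivAt θ hinner

section ExponentialFamily

variable {X E : Type*} [MeasurableSpace X] {ν : Measure X} [NormedAddCommGroup E]
  [InnerProductSpace ℝ E] {t : X → E}

theorem exists_integrable_exp_inner_add_mul_norm [FiniteDimensional ℝ E]
    (ht : AEStronglyMeasurable t ν) {η : E}
    (hη : η ∈ interior {θ | Integrable (fun x => Real.exp ⟪θ, t x⟫) ν}) :
    ∃ c > 0, Integrable (fun x => Real.exp (⟪η, t x⟫ + c * ‖t x‖)) ν := by
  set b := stdOrthonormalBasis ℝ E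
  have hnear : ∀ᶠ c in 𝓝 (0 : ℝ),
      ∀ s, Integrable (fun x => Real.exp ⟪η + c • b.cubeVertex s, t x⟫) ν := by
    refine eventually_all.2 fun s => ?_
    have : Tendsto (fun c : ℝ => η + c • b.cubeVertex s) (𝓝 0) (𝓝 η) :=
      (continuous_const.add (continuous_id.smul continuous_const)).tendsto' _ _ (by simp)
    exact this.eventually (mem_interior_iff_mem_nhds.1 hη)
  obtain ⟨c, hc_int, hc_pos⟩ :=
    ((hnear.filter_mono nhdsWithin_le_nhds).and (self_mem_nhdsWithin (s := Set.Ioi 0))).exists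
  refine ⟨c, hc_pos, (integrable_finsetSum Finset.univ fun s _ => hc_int s).mono' ?_ ?_⟩
  · exact (by fun_prop : Continuous fun y : E => Real.exp (⟪η, y⟫ + c * ‖y‖))
      |>.comp_aestronglyMeasurable ht
  · refine Eventually.of_forall fun x => ?_
    rw [Real.norm_of_nonneg (Real.exp_pos _).le]
    exact b.exp_inner_add_mul_norm_le hc_pos.le η (t x)

theorem hasGradientAt_integral_exp_inner [CompleteSpace E] (ht : AEStronglyMeasurable t ν)
    {η : E} {c : ℝ} (hc : 0 < c) (hint : Integrable (fun x => Real.exp (⟪η, t x⟫ + c * ‖t x‖)) ν) :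
    HasGradientAt (fun θ => ∫ x, Real.exp ⟪θ, t x⟫ ∂ν) (∫ x, Real.exp ⟪η, t x⟫ • t x ∂ν) η := by
  have hmeas : ∀ θ : E, AEStronglyMeasurable (fun x => Real.exp ⟪θ, t x⟫ • t x) ν := fun θ =>
    (by fun_prop : Continuous fun y : E => Real.exp ⟪θ, y⟫ • y).comp_aestronglyMeasurable ht
  have hbound : ∀ x, ∀ θ ∈ Metric.closedBall η (c / 2),
      ‖Real.exp ⟪θ, t x⟫ • t x‖ ≤ 2 / c * Real.exp (⟪η, t x⟫ + c * ‖t x‖) := fun x θ hθ => by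
    rw [norm_smul, Real.norm_of_nonneg (Real.exp_pos _).le]
    exact Real.exp_inner_mul_norm_le hc (mem_closedBall_iff_norm.1 hθ) (t x)
  have hint_smul : Integrable (fun x => Real.exp ⟪η, t x⟫ • t x) ν :=
    (hint.const_mul _).mono' (hmeas η) (Eventually.of_forall fun x =>
      hbound x η (Metric.mem_closedBall_self (by positivity)))
  have hint_exp : Integrable (fun x => Real.exp ⟪η, t x⟫) ν :=
    hint.mono' ((by fun_prop : Continuous fun y : E => Real.exp ⟪η, y⟫).comp_aestronglyMeasurable ht)
      (Eventually.of_forall fun x => by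
        rw [Real.norm_of_nonneg (Real.exp_pos _).le]
        gcongr
        exact le_add_of_nonneg_right (by positivity))
  have hdual : InnerProductSpace.toDual ℝ E (∫ x, Real.exp ⟪η, t x⟫ • t x ∂ν) =
      ∫ x, InnerProductSpace.toDual ℝ E (Real.exp ⟪η, t x⟫ • t x) ∂ν :=
    -- over `ℝ` the conjugate-linear `innerSL` is linear by definitional unfolding
    (ContinuousLinearMap.integral_comp_comm (innerSL ℝ : E →L[ℝ] E →L[ℝ] ℝ) hint_smul).symm
  rw [hasGradientAt_iff_hasFDerivAt, hdual]
  refine hasFDerivAt_integral_of_dominated_of_fderiv_le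
    (F' := fun θ x => InnerProductSpace.toDual ℝ E (Real.exp ⟪θ, t x⟫ • t x))
    (Metric.closedBall_mem_nhds η (half_pos hc))
    (Eventually.of_forall fun θ => ?_) hint_exp ?_
    (Eventually.of_forall fun x θ hθ => ?_) (hint.const_mul (2 / c))
    (Eventually.of_forall fun x θ _ => ?_)
  · exact (by fun_prop : Continuous fun y : E => Real.exp ⟪θ, y⟫).comp_aestronglyMeasurable ht
  · exact (InnerProductSpace.toDual ℝ E).continuous.comp_aestronglyMeasurable (hmeas η)
  · simpa only [LinearIsometryEquiv.norm_map] using hbound x θ hθ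
  · exact hasGradientAt_iff_hasFDerivAt.1 (hasGradientAt_exp_inner θ (t x))

end ExponentialFamily

theorem stmt2_general {X : Type*} [MeasurableSpace X] (ν : Measure X)
    {n : ℕ} (t : X → EuclideanSpace ℝ (Fin n)) (ht : Measurable t)
    (Z : EuclideanSpace ℝ (Fin n) → ℝ)
    (hZ : ∀ η, Z η = ∫ x, Real.exp ⟪η, t x⟫ ∂ν)
    (H : Set (EuclideanSpace ℝ (Fin n)))
    (hH : H = {η | Integrable (fun x => Real.exp ⟪η, t x⟫) ν})
    (hpos : ∀ η ∈ H, 0 < Z η)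
    (η : EuclideanSpace ℝ (Fin n)) (hη : η ∈ interior H) :
    HasGradientAt (fun η' => Real.log (Z η'))
      (∫ x, Real.exp (⟪η, t x⟫ - Real.log (Z η)) • t x ∂ν) η := by
  have hZη : 0 < Z η := hpos η (interior_subset hη)
  obtain rfl : Z = fun θ => ∫ x, Real.exp ⟪θ, t x⟫ ∂ν := funext hZ
  subst hH
  obtain ⟨c, hc, hint⟩ := exists_integrable_exp_inner_add_mul_norm ht.aestronglyMeasurable hη
  convert (hasGradientAt_integral_exp_inner ht.aestronglyMeasurable hc hint).log hZη.ne' using 1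
  rw [← integral_smul]
  congr with x
  rw [Real.exp_sub, Real.exp_log hZη, div_eq_inv_mul, mul_smul]

/-- **Gradient of the log partition function is the expected sufficient statistic.**
For a σ-finite measure `ν` on `X` and statistic `t : X → ℝⁿ`, define
`Z(η) = ∫ exp⟪η, t x⟫ dν` and `H = {η : Z(η) < ∞}` (expressed via integrability),
and assume `Z > 0` on `H`.  If `η` lies in the interior of `H`, then `log Z` is
differentiable at `η` with gradient the expected sufficient statistic
`∫ t(x) · exp(⟪η, t x⟫ − log Z(η)) dν` under the exponential family density `p(·|η)`. -/
theorem stmt2 {X : Type*} [MeasurableSpace X] (ν : Measure X) [SigmaFinite ν]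
    {n : ℕ} (t : X → EuclideanSpace ℝ (Fin n)) (ht : Measurable t)
    (Z : EuclideanSpace ℝ (Fin n) → ℝ)
    (hZ : ∀ η, Z η = ∫ x, Real.exp ⟪η, t x⟫ ∂ν)
    (H : Set (EuclideanSpace ℝ (Fin n)))
    (hH : H = {η | Integrable (fun x => Real.exp ⟪η, t x⟫) ν})
    (hpos : ∀ η ∈ H, 0 < Z η)
    (η : EuclideanSpace ℝ (Fin n)) (hη : η ∈ interior H) :
    HasGradientAt (fun η' => Real.log (Z η'))
      (∫ x, Real.exp (⟪η, t x⟫ - Real.log (Z η)) • t x ∂ν) η :=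
  stmt2_general ν t ht Z hZ H hH hpos η hη
end

section
/- For a σ-finite measure ν on a measurable space X and a statistic t : X → ℝ^n with partition function Z and H = {η : 0 < Z(η) < ∞}, suppose the family is minimal in the sense that for every nonzero v ∈ ℝ^n the function x ↦ ⟨v, t(x)⟩ is not ν-almost-everywhere equal to a constant. Then for every η in the interior of H, the Hessian ∇² log Z(η) is positive definite: vᵀ (∇² log Z(η)) v > 0 for all nonzero v ∈ ℝ^n. -/
open MeasureTheory
open scoped RealInnerProductSpace

/-!
The gradient map of `log Z` sends `η'` to the mean of `t` under the exponential-family law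
`P_η' = ν.tilted ⟪η', t⟫`. Since tilting `P_η` by `s * ⟪v, t⟫` gives `P_(η + s • v)`, the
pairing of this mean with `v` along the line `η + s • v` is the derivative of the cumulant
generating function of `⟪v, t⟫` under `P_η`. Hence `⟪v, L v⟫` is its second derivative at `0`,
the variance of `⟪v, t⟫` under `P_η`, which is positive because `P_η` has the same null sets as
`ν` and `⟪v, t⟫` is not `ν`-a.e. constant.
-/

open ProbabilityTheory Real Filter Topology

section

variable {X : Type*} [MeasurableSpace X] {μ : Measure X}
variable {E : Type*} [NormedAddCommGroup E] [InnerProductSpace ℝ E]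

lemma integrable_of_forall_integrable_inner [FiniteDimensional ℝ E] {f : X → E}
    (h : ∀ w, Integrable (fun x => ⟪w, f x⟫) μ) : Integrable f μ := by
  let b := stdOrthonormalBasis ℝ E
  rw [← b.repr.integrable_comp_iff, integrable_piLp_iff]
  intro i
  simpa [b.repr_apply_apply] using h (b i)

lemma hasDerivAt_deriv_cgf {Y : X → ℝ} {s : ℝ} (hs : s ∈ interior (integrableExpSet Y μ)) :
    HasDerivAt (deriv (cgf Y μ)) Var[Y; μ.tilted (s * Y ·)] s := by
  rw [variance_tilted_mul hs, iteratedDeriv_succ, iteratedDeriv_one]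
  exact ((analyticAt_cgf hs).deriv.differentiableAt).hasDerivAt

lemma variance_tilted_pos [NeZero μ] {f Y : X → ℝ} (hf : Integrable (fun x => exp (f x)) μ)
    (hY : MemLp Y 2 (μ.tilted f)) (hconst : ∀ c, ¬ ∀ᵐ x ∂μ, Y x = c) :
    0 < Var[Y; μ.tilted f] := by
  have := isProbabilityMeasure_tilted hf
  refine (variance_nonneg _ _).lt_of_ne fun h => hconst (μ.tilted f)[Y] ?_
  exact absolutelyContinuous_tilted hf (ae_eq_integral_of_variance_eq_zero hY h.symm)

lemma eventually_add_smul_mem_interior {S : Set E} {η : E} (hη : η ∈ interior S) (v : E) :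
    ∀ᶠ s : ℝ in 𝓝 0, η + s • v ∈ interior S :=
  (by fun_prop : Continuous fun s : ℝ => η + s • v).continuousAt.eventually_mem
    (isOpen_interior.mem_nhds (by simpa using hη))

def naturalParamSet (μ : Measure X) (t : X → E) : Set E :=
  {η | Integrable (fun x => exp ⟪η, t x⟫) μ}

variable {t : X → E}

lemma integrableExpSet_tilted_inner {η : E} (hη : η ∈ naturalParamSet μ t) (v : E) :
    integrableExpSet (fun x => ⟪v, t x⟫) (μ.tilted fun x => ⟪η, t x⟫) =
      (fun s : ℝ => η + s • v) ⁻¹' naturalParamSet μ t := by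
  ext s
  simp only [integrableExpSet, naturalParamSet, Set.mem_ofPred_eq, Set.mem_preimage,
    integrable_tilted_iff hη, smul_eq_mul, ← exp_add, inner_add_left, real_inner_smul_left]

lemma mem_interior_integrableExpSet_tilted_inner {η v : E} {s : ℝ}
    (hη : η ∈ naturalParamSet μ t) (hs : η + s • v ∈ interior (naturalParamSet μ t)) :
    s ∈ interior (integrableExpSet (fun x => ⟪v, t x⟫) (μ.tilted fun x => ⟪η, t x⟫)) := by
  rw [integrableExpSet_tilted_inner hη]
  exact preimage_interior_subset_interior_preimage (by fun_prop) hs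

lemma integrable_tilted_of_mem_interior [FiniteDimensional ℝ E] {η : E}
    (hη : η ∈ interior (naturalParamSet μ t)) : Integrable t (μ.tilted fun x => ⟪η, t x⟫) := by
  refine integrable_of_forall_integrable_inner fun w => ?_
  have h0 := mem_interior_integrableExpSet_tilted_inner (s := 0) (v := w) (interior_subset hη)
    (by simpa using hη)
  simpa using integrable_pow_mul_exp_of_mem_interior_integrableExpSet h0 1

lemma integral_exp_inner_sub_log_smul {η : E} (hZ : 0 < ∫ x, exp ⟪η, t x⟫ ∂μ) :
    ∫ x, exp (⟪η, t x⟫ - log (∫ x, exp ⟪η, t x⟫ ∂μ)) • t x ∂μ =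
      ∫ x, t x ∂(μ.tilted fun x => ⟪η, t x⟫) := by
  simp_rw [integral_tilted, exp_sub, exp_log hZ]

lemma inner_integral_tilted_eventuallyEq_deriv_cgf [FiniteDimensional ℝ E] {η : E}
    (hη : η ∈ interior (naturalParamSet μ t)) (v : E) :
    (fun s : ℝ => ⟪v, ∫ x, t x ∂(μ.tilted fun x => ⟪η + s • v, t x⟫)⟫) =ᶠ[𝓝 0]
      deriv (cgf (fun x => ⟪v, t x⟫) (μ.tilted fun x => ⟪η, t x⟫)) := by
  have hη₀ : η ∈ naturalParamSet μ t := interior_subset hη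
  filter_upwards [eventually_add_smul_mem_interior hη v] with s hs
  have htilt : (μ.tilted fun x => ⟪η + s • v, t x⟫) =
      (μ.tilted fun x => ⟪η, t x⟫).tilted (s * ⟪v, t ·⟫) := by
    rw [tilted_tilted hη₀]
    congr with x
    simp [inner_add_left, real_inner_smul_left]
  rw [← integral_inner (integrable_tilted_of_mem_interior hs), htilt,
    integral_tilted_mul_self (mem_interior_integrableExpSet_tilted_inner hη₀ hs)]

end

theorem stmt4_general {X : Type*} [MeasurableSpace X] (ν : Measure X)
    {n : ℕ} (t : X → EuclideanSpace ℝ (Fin n))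
    (Z : EuclideanSpace ℝ (Fin n) → ℝ)
    (hZ : ∀ η, Z η = ∫ x, Real.exp ⟪η, t x⟫ ∂ν)
    (H : Set (EuclideanSpace ℝ (Fin n)))
    (hH : H = {η | Integrable (fun x => Real.exp ⟪η, t x⟫) ν ∧ 0 < Z η})
    (hmin : ∀ v : EuclideanSpace ℝ (Fin n), v ≠ 0 →
      ∀ c : ℝ, ¬ (∀ᵐ x ∂ν, ⟪v, t x⟫ = c)) :
    ∀ η ∈ interior H,
      ∀ L : EuclideanSpace ℝ (Fin n) →L[ℝ] EuclideanSpace ℝ (Fin n),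
        HasFDerivAt (fun η' => ∫ x, Real.exp (⟪η', t x⟫ - Real.log (Z η')) • t x ∂ν) L η →
        ∀ v : EuclideanSpace ℝ (Fin n), v ≠ 0 → 0 < ⟪v, L v⟫ := by
  intro η hη L hL v hv
  obtain rfl : Z = fun η => ∫ x, exp ⟪η, t x⟫ ∂ν := funext hZ
  subst hH
  have hηdom : η ∈ interior (naturalParamSet ν t) := interior_mono (fun _ h => h.1) hη
  have hηint : η ∈ naturalParamSet ν t := interior_subset hηdom
  have : NeZero ν := ⟨by rintro rfl; simpa using (interior_subset hη).2⟩
  set P := ν.tilted fun x => ⟪η, t x⟫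
  have : IsProbabilityMeasure P := isProbabilityMeasure_tilted hηint
  have h0 : (0 : ℝ) ∈ interior (integrableExpSet (fun x => ⟪v, t x⟫) P) :=
    mem_interior_integrableExpSet_tilted_inner hηint (by simpa using hηdom)
  have hline : HasDerivAt (fun s : ℝ => ⟪v, ∫ x, exp (⟪η + s • v, t x⟫ -
      log (∫ x, exp ⟪η + s • v, t x⟫ ∂ν)) • t x ∂ν⟫) ⟪v, L v⟫ 0 := by
    have hγ : HasDerivAt (fun s : ℝ => η + s • v) v 0 := by
      simpa using ((hasDerivAt_id (0 : ℝ)).smul_const v).const_add η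
    simpa using (hasDerivAt_const (0 : ℝ) v).inner ℝ (hL.comp_hasDerivAt_of_eq 0 hγ (by simp))
  have hG : (fun s : ℝ => ⟪v, ∫ x, exp (⟪η + s • v, t x⟫ -
      log (∫ x, exp ⟪η + s • v, t x⟫ ∂ν)) • t x ∂ν⟫) =ᶠ[𝓝 0]
      fun s => ⟪v, ∫ x, t x ∂(ν.tilted fun x => ⟪η + s • v, t x⟫)⟫ := by
    filter_upwards [eventually_add_smul_mem_interior hη v] with s hs
    rw [integral_exp_inner_sub_log_smul (interior_subset hs).2]
  rw [hline.unique ((hasDerivAt_deriv_cgf h0).congr_of_eventuallyEq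
    (hG.trans (inner_integral_tilted_eventuallyEq_deriv_cgf hηdom v)))]
  refine variance_tilted_pos (by simp) (memLp_tilted_mul h0 2) fun c hc => hmin v hv c ?_
  exact absolutelyContinuous_tilted hηint hc

/-- **Minimality implies a positive definite Hessian of the log partition function.**
For a σ-finite measure `ν` on `X` and statistic `t : X → ℝⁿ` with partition function
`Z(η) = ∫ exp⟪η, t x⟫ dν` and `H = {η : 0 < Z(η) < ∞}`, suppose the family is minimal:
for every nonzero `v ∈ ℝⁿ` the function `x ↦ ⟪v, t x⟫` is not `ν`-a.e. equal to a constant.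
Then for every `η` in the interior of `H`, the Hessian `∇² log Z(η)` — i.e. any derivative
`L` of the gradient map `η' ↦ E_{p(·|η')}[t]` of `log Z` at `η` — is positive definite:
`⟪v, L v⟫ > 0` for all `v ≠ 0`. -/
theorem stmt4 {X : Type*} [MeasurableSpace X] (ν : Measure X) [SigmaFinite ν]
    {n : ℕ} (t : X → EuclideanSpace ℝ (Fin n)) (ht : Measurable t)
    (Z : EuclideanSpace ℝ (Fin n) → ℝ)
    (hZ : ∀ η, Z η = ∫ x, Real.exp ⟪η, t x⟫ ∂ν)
    (H : Set (EuclideanSpace ℝ (Fin n)))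
    (hH : H = {η | Integrable (fun x => Real.exp ⟪η, t x⟫) ν ∧ 0 < Z η})
    (hmin : ∀ v : EuclideanSpace ℝ (Fin n), v ≠ 0 →
      ∀ c : ℝ, ¬ (∀ᵐ x ∂ν, ⟪v, t x⟫ = c)) :
    ∀ η ∈ interior H,
      ∀ L : EuclideanSpace ℝ (Fin n) →L[ℝ] EuclideanSpace ℝ (Fin n),
        HasFDerivAt (fun η' => ∫ x, Real.exp (⟪η', t x⟫ - Real.log (Z η')) • t x ∂ν) L η →
        ∀ v : EuclideanSpace ℝ (Fin n), v ≠ 0 → 0 < ⟪v, L v⟫ :=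
  stmt4_general ν t Z hZ H hH hmin
end

section
/- Let p(x, y|θ) = exp⟨t_θ(θ), (t_{xy}(x, y), 1)⟩ be an exponential family likelihood with t_θ(θ) = (η⁰_{xy}(θ), −log Z_{xy}(η⁰_{xy}(θ))) ∈ ℝ^{n+1}, let p(θ) = exp(⟨η⁰_θ, t_θ(θ)⟩ − log Z_θ(η⁰_θ)) be its natural exponential family conjugate prior with respect to ν_Θ, fix an observation y, and let q(x) be a fixed probability density on X with E_{q(x)}[(t_{xy}(x,y), 1)] finite. Define η* = η⁰_θ + E_{q(x)}[(t_{xy}(x, y), 1)] and assume Z_θ(η*) < ∞, and set q*(θ) = exp(⟨η*, t_θ(θ)⟩ − log Z_θ(η*)). Then q*(θ) maximizes the mean field objective L[q(θ)q(x)] = E_{q(θ)q(x)}[log(p(θ)p(x,y|θ)/(q(θ)q(x)))] over all probability densities q(θ) for which the objective is well defined; in particular, the optimal global factor lies in the same exponential family as the prior p(θ). -/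
/-!
Integrating out `x` (Fubini), the objective becomes
`L[q(θ)q(x)] = ∫ q (⟨η*, tθ⟩ - log q) dνΘ - (log Z_θ(η⁰) + E_{q(x)}[log q(x)])`,
because the log-likelihood is linear in `(T x, 1)`, so only its mean `s` survives and
`η* = η⁰ + s` appears.  Only the first term depends on `q(θ)`, and by `log u ≤ u - 1` (Gibbs)
it is at most `log Z_θ(η*)`, a value attained at `q* = exp (⟨η*, tθ⟩ - log Z_θ(η*))`.
-/

open MeasureTheory

/-- The standard inner product on `ℝⁿ × ℝ ≅ ℝ^{n+1}`. -/
def ip {n : ℕ} (a b : (Fin n → ℝ) × ℝ) : ℝ := (∑ i, a.1 i * b.1 i) + a.2 * b.2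

section InnerProduct

variable {n : ℕ}

lemma ip_comm (a b : (Fin n → ℝ) × ℝ) : ip a b = ip b a := by
  simp only [ip, mul_comm]

lemma ip_add_left (a b c : (Fin n → ℝ) × ℝ) : ip (a + b) c = ip a c + ip b c := by
  simp only [ip, Prod.fst_add, Prod.snd_add, Pi.add_apply, add_mul, Finset.sum_add_distrib]
  ring

lemma ip_smul_right (a b : (Fin n → ℝ) × ℝ) (c : ℝ) : ip a (c • b) = c * ip a b := by
  simp only [ip, Prod.smul_fst, Prod.smul_snd, Pi.smul_apply, smul_eq_mul, mul_left_comm _ c,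
    mul_add, Finset.mul_sum]

noncomputable def ipRightCLM (a : (Fin n → ℝ) × ℝ) : ((Fin n → ℝ) × ℝ) →L[ℝ] ℝ :=
  LinearMap.toContinuousLinearMap
    { toFun := ip a
      map_add' := fun b c => by rw [ip_comm, ip_add_left, ip_comm b, ip_comm c]
      map_smul' := fun r b => ip_smul_right a b r }

variable {α : Type*} [MeasurableSpace α] {μ : Measure α} {f : α → (Fin n → ℝ) × ℝ}

lemma integrable_ip_right (a : (Fin n → ℝ) × ℝ) (hf : Integrable f μ) :
    Integrable (fun x => ip a (f x)) μ :=
  (ipRightCLM a).integrable_comp hf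

lemma integral_ip_right (a : (Fin n → ℝ) × ℝ) (hf : Integrable f μ) :
    ∫ x, ip a (f x) ∂μ = ip a (∫ x, f x ∂μ) :=
  (ipRightCLM a).integral_comp_comm hf

end InnerProduct

open Real in
lemma mul_log_sub_log_le {p q : ℝ} (hp : 0 < p) (hq : 0 ≤ q) : q * (log p - log q) ≤ p - q := by
  rcases hq.eq_or_lt with rfl | hq
  · simpa using hp.le
  have h := log_le_sub_one_of_pos (div_pos hp hq)
  rw [log_div hp.ne' hq.ne'] at h
  calc q * (log p - log q) ≤ q * (p / q - 1) := mul_le_mul_of_nonneg_left h hq.le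
    _ = p - q := by field_simp

section Gibbs

open Real

variable {α : Type*} [MeasurableSpace α] {μ : Measure α} {f : α → ℝ}

lemma integral_exp_sub_log_integral_exp (hZ : 0 < ∫ x, exp (f x) ∂μ) :
    ∫ x, exp (f x - log (∫ x, exp (f x) ∂μ)) ∂μ = 1 := by
  simp only [exp_sub, exp_log hZ, integral_div, div_self hZ.ne']

lemma integral_mul_sub_log_eq_log_integral_exp (hZ : 0 < ∫ x, exp (f x) ∂μ) {q : α → ℝ}
    (hq : ∀ x, q x = exp (f x - log (∫ x, exp (f x) ∂μ))) :
    ∫ x, q x * (f x - log (q x)) ∂μ = log (∫ x, exp (f x) ∂μ) := by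
  have hq1 : ∫ x, q x ∂μ = 1 := by simp only [hq, integral_exp_sub_log_integral_exp hZ]
  simp only [hq, log_exp, sub_sub_cancel]
  rw [integral_mul_const, ← funext hq, hq1, one_mul]

/-- Gibbs' variational principle. -/
theorem integral_mul_sub_log_le_log_integral_exp {q : α → ℝ} (hq0 : ∀ x, 0 ≤ q x)
    (hq1 : ∫ x, q x ∂μ = 1) (hqf : Integrable (fun x => q x * (f x - log (q x))) μ)
    (hexp : Integrable (fun x => exp (f x)) μ) (hZ : 0 < ∫ x, exp (f x) ∂μ) :
    ∫ x, q x * (f x - log (q x)) ∂μ ≤ log (∫ x, exp (f x) ∂μ) := by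
  set Z := ∫ x, exp (f x) ∂μ
  have hq : Integrable q μ := integrable_of_integral_eq_one hq1
  have hpt : ∀ x, q x * (f x - log (q x)) - q x * log Z ≤ exp (f x) / Z - q x := fun x => by
    have h := mul_log_sub_log_le (div_pos (exp_pos (f x)) hZ) (hq0 x)
    rw [log_div (exp_pos _).ne' hZ.ne', log_exp] at h
    linarith
  have h : ∫ x, (q x * (f x - log (q x)) - q x * log Z) ∂μ ≤ ∫ x, (exp (f x) / Z - q x) ∂μ :=
    integral_mono (hqf.sub (hq.mul_const _)) ((hexp.div_const Z).sub hq) hpt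
  rw [integral_sub hqf (hq.mul_const _), integral_sub (hexp.div_const Z) hq, integral_mul_const,
    integral_div, hq1, div_self hZ.ne'] at h
  linarith

end Gibbs

/-- No sign conditions are needed: `Real.log 0 = 0` and `Real.log` is even. -/
lemma mul_mul_log_div_mul (a b : ℝ) {c : ℝ} (hc : c ≠ 0) :
    a * b * Real.log (c / (a * b)) =
      a * b * Real.log c - b * (a * Real.log a) - a * (b * Real.log b) := by
  rcases eq_or_ne a 0 with rfl | ha
  · simp
  rcases eq_or_ne b 0 with rfl | hb
  · simp
  rw [Real.log_div hc (mul_ne_zero ha hb), Real.log_mul ha hb]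
  ring

section MeanField

open Real

variable {X Θ : Type*} {n : ℕ} {T : X → Fin n → ℝ} {tθ : Θ → (Fin n → ℝ) × ℝ}
  {η0 : (Fin n → ℝ) × ℝ} {Z0 : ℝ} {qx : X → ℝ}

/-- The integrand of `L[q(θ)q(x)]` for the prior `exp (⟨η0, tθ θ⟩ - log Z0)` and the likelihood
`exp ⟨tθ θ, (T x, 1)⟩`. -/
noncomputable def meanFieldIntegrand (η0 : (Fin n → ℝ) × ℝ) (Z0 : ℝ) (T : X → Fin n → ℝ)
    (tθ : Θ → (Fin n → ℝ) × ℝ) (q : Θ → ℝ) (qx : X → ℝ) (p : Θ × X) : ℝ :=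
  q p.1 * qx p.2 *
    log (exp (ip η0 (tθ p.1) - log Z0) * exp (ip (tθ p.1) (T p.2, 1)) / (q p.1 * qx p.2))

lemma meanFieldIntegrand_apply (q : Θ → ℝ) (θ : Θ) (x : X) :
    meanFieldIntegrand η0 Z0 T tθ q qx (θ, x) =
      q θ * (ip η0 (tθ θ) - log Z0 - log (q θ)) * qx x
        + q θ * ip (tθ θ) (qx x • ((T x, 1) : (Fin n → ℝ) × ℝ)) - q θ * (qx x * log (qx x)) := by
  rw [meanFieldIntegrand, mul_mul_log_div_mul _ _ (by positivity), ← exp_add, log_exp,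
    ip_smul_right]
  ring

variable [MeasurableSpace X] {νX : Measure X}

lemma integral_meanFieldIntegrand_slice (hqx1 : ∫ x, qx x ∂νX = 1)
    (hs : Integrable (fun x => qx x • ((T x, 1) : (Fin n → ℝ) × ℝ)) νX)
    (hH : Integrable (fun x => qx x * log (qx x)) νX)
    (q : Θ → ℝ) (θ : Θ) :
    ∫ x, meanFieldIntegrand η0 Z0 T tθ q qx (θ, x) ∂νX =
      q θ * (ip (η0 + ∫ x, qx x • ((T x, 1) : (Fin n → ℝ) × ℝ) ∂νX) (tθ θ) - log (q θ))
        - q θ * (log Z0 + ∫ x, qx x * log (qx x) ∂νX) := by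
  have hqx := (integrable_of_integral_eq_one hqx1).const_mul
    (q θ * (ip η0 (tθ θ) - log Z0 - log (q θ)))
  have hip := (integrable_ip_right (tθ θ) hs).const_mul (q θ)
  simp only [meanFieldIntegrand_apply]
  rw [integral_sub (hqx.add hip : Integrable (fun x => _ + _) νX) (hH.const_mul _),
    integral_add hqx hip, integral_const_mul, integral_const_mul, integral_const_mul, hqx1, integral_ip_right _ hs, ip_add_left,
    ip_comm (tθ θ)]
  ring

variable [MeasurableSpace Θ] {νΘ : Measure Θ}

lemma integrable_mul_log_of_integrable_meanFieldIntegrand [SFinite νX] [SFinite νΘ]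
    (hqx1 : ∫ x, qx x ∂νX = 1)
    (hs : Integrable (fun x => qx x • ((T x, 1) : (Fin n → ℝ) × ℝ)) νX)
    {q : Θ → ℝ} (hq1 : ∫ θ, q θ ∂νΘ = 1)
    (h : Integrable (meanFieldIntegrand η0 Z0 T tθ q qx) (νΘ.prod νX)) :
    Integrable (fun x => qx x * log (qx x)) νX := by
  obtain ⟨θ, hθ, hslice⟩ := ((frequently_ae_ne_zero_of_integral_ne_zero
    (hq1 ▸ one_ne_zero)).and_eventually h.prod_right_ae).exists
  refine ((((integrable_of_integral_eq_one hqx1).const_mul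
    (q θ * (ip η0 (tθ θ) - log Z0 - log (q θ)))).add
      ((integrable_ip_right (tθ θ) hs).const_mul (q θ))).sub hslice).const_mul (q θ)⁻¹
    |>.congr (Filter.Eventually.of_forall fun x => ?_)
  simp only [Pi.add_apply, Pi.sub_apply, meanFieldIntegrand_apply]
  field_simp
  ring

lemma integral_meanFieldIntegrand [SFinite νX] [SFinite νΘ] (hqx1 : ∫ x, qx x ∂νX = 1)
    (hs : Integrable (fun x => qx x • ((T x, 1) : (Fin n → ℝ) × ℝ)) νX)
    {q : Θ → ℝ} (hq1 : ∫ θ, q θ ∂νΘ = 1)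
    (h : Integrable (meanFieldIntegrand η0 Z0 T tθ q qx) (νΘ.prod νX)) :
    Integrable (fun θ =>
      q θ * (ip (η0 + ∫ x, qx x • ((T x, 1) : (Fin n → ℝ) × ℝ) ∂νX) (tθ θ) - log (q θ))) νΘ ∧
    ∫ p, meanFieldIntegrand η0 Z0 T tθ q qx p ∂(νΘ.prod νX) =
      ∫ θ, q θ * (ip (η0 + ∫ x, qx x • ((T x, 1) : (Fin n → ℝ) × ℝ) ∂νX) (tθ θ) - log (q θ)) ∂νΘ
        - (log Z0 + ∫ x, qx x * log (qx x) ∂νX) := by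
  have hH := integrable_mul_log_of_integrable_meanFieldIntegrand hqx1 hs hq1 h
  have hslice := integral_meanFieldIntegrand_slice hqx1 hs hH (η0 := η0) (Z0 := Z0) (tθ := tθ) q
  have hC := (integrable_of_integral_eq_one hq1).mul_const (log Z0 + ∫ x, qx x * log (qx x) ∂νX)
  have hI' : Integrable (fun θ => q θ * (ip (η0 + ∫ x, qx x • ((T x, 1) : (Fin n → ℝ) × ℝ) ∂νX)
      (tθ θ) - log (q θ)) - q θ * (log Z0 + ∫ x, qx x * log (qx x) ∂νX)) νΘ := by
    simpa only [hslice] using h.integral_prod_left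
  have hI := (hI'.add hC).congr (ae_of_all _ fun θ => sub_add_cancel _ _)
  refine ⟨hI, ?_⟩
  rw [integral_prod _ h]
  simp only [hslice]
  rw [integral_sub hI hC, integral_mul_const, hq1, one_mul]

end MeanField

theorem stmt10_general {X Θ : Type*} [MeasurableSpace X] [MeasurableSpace Θ]
    (νX : Measure X) (νΘ : Measure Θ) [SigmaFinite νX] [SigmaFinite νΘ]
    {n : ℕ}
    (T : X → Fin n → ℝ)
    (tθ : Θ → (Fin n → ℝ) × ℝ)
    (Zθ : ((Fin n → ℝ) × ℝ) → ℝ)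
    (hZθ : ∀ η, Zθ η = ∫ θ, Real.exp (ip η (tθ θ)) ∂νΘ)
    (η0 : (Fin n → ℝ) × ℝ)
    (qx : X → ℝ) (hqx1 : ∫ x, qx x ∂νX = 1)
    (hsInt : Integrable (fun x => qx x • ((T x, (1 : ℝ)) : (Fin n → ℝ) × ℝ)) νX)
    (s : (Fin n → ℝ) × ℝ) (hs : s = ∫ x, qx x • ((T x, (1 : ℝ)) : (Fin n → ℝ) × ℝ) ∂νX)
    (ηstar : (Fin n → ℝ) × ℝ) (hηstar : ηstar = η0 + s)
    (hZstar_int : Integrable (fun θ => Real.exp (ip ηstar (tθ θ))) νΘ)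
    (hZstar_pos : 0 < Zθ ηstar)
    (qstar : Θ → ℝ)
    (hqstar : ∀ θ, qstar θ = Real.exp (ip ηstar (tθ θ) - Real.log (Zθ ηstar)))
    (hstarInt : Integrable (fun pr : Θ × X =>
        qstar pr.1 * qx pr.2 *
          Real.log (Real.exp (ip η0 (tθ pr.1) - Real.log (Zθ η0)) *
              Real.exp (ip (tθ pr.1) (T pr.2, 1)) / (qstar pr.1 * qx pr.2)))
        (νΘ.prod νX)) :
    ∀ qθ : Θ → ℝ, (∀ θ, 0 ≤ qθ θ) → (∫ θ, qθ θ ∂νΘ = 1) →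
      Integrable (fun pr : Θ × X =>
        qθ pr.1 * qx pr.2 *
          Real.log (Real.exp (ip η0 (tθ pr.1) - Real.log (Zθ η0)) *
              Real.exp (ip (tθ pr.1) (T pr.2, 1)) / (qθ pr.1 * qx pr.2)))
        (νΘ.prod νX) →
      (∫ pr : Θ × X, qθ pr.1 * qx pr.2 *
          Real.log (Real.exp (ip η0 (tθ pr.1) - Real.log (Zθ η0)) *
              Real.exp (ip (tθ pr.1) (T pr.2, 1)) / (qθ pr.1 * qx pr.2)) ∂(νΘ.prod νX))
        ≤ ∫ pr : Θ × X, qstar pr.1 * qx pr.2 *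
            Real.log (Real.exp (ip η0 (tθ pr.1) - Real.log (Zθ η0)) *
              Real.exp (ip (tθ pr.1) (T pr.2, 1)) / (qstar pr.1 * qx pr.2)) ∂(νΘ.prod νX) := by
  intro qθ hq0 hq1 hint
  subst hs hηstar
  rw [hZθ] at hqstar hZstar_pos
  have hqstar1 : ∫ θ, qstar θ ∂νΘ = 1 := by
    simp only [hqstar, integral_exp_sub_log_integral_exp hZstar_pos]
  obtain ⟨hIq, hLq⟩ := integral_meanFieldIntegrand hqx1 hsInt hq1 hint
  obtain ⟨-, hLs⟩ := integral_meanFieldIntegrand hqx1 hsInt hqstar1 hstarInt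
  refine (hLq.trans_le ?_).trans_eq hLs.symm
  rw [integral_mul_sub_log_eq_log_integral_exp hZstar_pos hqstar]
  exact sub_le_sub_right
    (integral_mul_sub_log_le_log_integral_exp hq0 hq1 hIq hZstar_int hZstar_pos) _

/-- **Optimal form of the global variational factor (conjugate case).**
Let `p(x, y|θ) = exp⟨t_θ(θ), (t_{xy}(x, y), 1)⟩` be an exponential family likelihood
with natural exponential family conjugate prior
`p(θ) = exp(⟨η⁰_θ, t_θ(θ)⟩ − log Z_θ(η⁰_θ))`, fix the observation `y` (so `T x`
denotes `t_{xy}(x, y)`), and let `q(x)` be a fixed probability density with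
`s = E_{q(x)}[(T x, 1)]` finite.  Set `η* = η⁰_θ + s`, assume `Z_θ(η*) < ∞` (and the
relevant partition values positive), and `q*(θ) = exp(⟨η*, t_θ(θ)⟩ − log Z_θ(η*))`.
Then `q*` maximizes the mean field objective
`L[q(θ)q(x)] = E_{q(θ)q(x)}[log (p(θ)p(x,y|θ)/(q(θ)q(x)))]` over all probability
densities `q(θ)` for which the objective is well defined; in particular the optimal
global factor lies in the same exponential family as the prior. -/
theorem stmt10 {X Θ : Type*} [MeasurableSpace X] [MeasurableSpace Θ]
    (νX : Measure X) (νΘ : Measure Θ) [SigmaFinite νX] [SigmaFinite νΘ]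
    {n : ℕ}
    (T : X → Fin n → ℝ)
    (tθ : Θ → (Fin n → ℝ) × ℝ)
    (Zθ : ((Fin n → ℝ) × ℝ) → ℝ)
    (hZθ : ∀ η, Zθ η = ∫ θ, Real.exp (ip η (tθ θ)) ∂νΘ)
    (η0 : (Fin n → ℝ) × ℝ)
    (hprior_int : Integrable (fun θ => Real.exp (ip η0 (tθ θ))) νΘ)
    (hprior_pos : 0 < Zθ η0)
    (qx : X → ℝ) (hqx0 : ∀ x, 0 ≤ qx x) (hqx1 : ∫ x, qx x ∂νX = 1)
    (hsInt : Integrable (fun x => qx x • ((T x, (1 : ℝ)) : (Fin n → ℝ) × ℝ)) νX)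
    (s : (Fin n → ℝ) × ℝ) (hs : s = ∫ x, qx x • ((T x, (1 : ℝ)) : (Fin n → ℝ) × ℝ) ∂νX)
    (ηstar : (Fin n → ℝ) × ℝ) (hηstar : ηstar = η0 + s)
    (hZstar_int : Integrable (fun θ => Real.exp (ip ηstar (tθ θ))) νΘ)
    (hZstar_pos : 0 < Zθ ηstar)
    (qstar : Θ → ℝ)
    (hqstar : ∀ θ, qstar θ = Real.exp (ip ηstar (tθ θ) - Real.log (Zθ ηstar)))
    (hstarInt : Integrable (fun pr : Θ × X =>
        qstar pr.1 * qx pr.2 *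
          Real.log (Real.exp (ip η0 (tθ pr.1) - Real.log (Zθ η0)) *
              Real.exp (ip (tθ pr.1) (T pr.2, 1)) / (qstar pr.1 * qx pr.2)))
        (νΘ.prod νX)) :
    ∀ qθ : Θ → ℝ, (∀ θ, 0 ≤ qθ θ) → (∫ θ, qθ θ ∂νΘ = 1) →
      Integrable (fun pr : Θ × X =>
        qθ pr.1 * qx pr.2 *
          Real.log (Real.exp (ip η0 (tθ pr.1) - Real.log (Zθ η0)) *
              Real.exp (ip (tθ pr.1) (T pr.2, 1)) / (qθ pr.1 * qx pr.2)))
        (νΘ.prod νX) →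
      (∫ pr : Θ × X, qθ pr.1 * qx pr.2 *
          Real.log (Real.exp (ip η0 (tθ pr.1) - Real.log (Zθ η0)) *
              Real.exp (ip (tθ pr.1) (T pr.2, 1)) / (qθ pr.1 * qx pr.2)) ∂(νΘ.prod νX))
        ≤ ∫ pr : Θ × X, qstar pr.1 * qx pr.2 *
            Real.log (Real.exp (ip η0 (tθ pr.1) - Real.log (Zθ η0)) *
              Real.exp (ip (tθ pr.1) (T pr.2, 1)) / (qstar pr.1 * qx pr.2)) ∂(νΘ.prod νX) :=
  stmt10_general νX νΘ T tθ Zθ hZθ η0 qx hqx1 hsInt s hs ηstar hηstar hZstar_int hZstar_pos qstar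
    hqstar hstarInt
end

section
/- Let p(x, y|θ) = exp⟨t_θ(θ), (t_{xy}(x,y), 1)⟩ be an exponential family likelihood with conjugate prior p(θ) = exp(⟨η⁰_θ, t_θ(θ)⟩ − log Z_θ(η⁰_θ)), fix data y and a probability density q(x) with s = E_{q(x)}[(t_{xy}(x, y), 1)] ∈ ℝ^{n+1} finite, and parameterize q(θ) = exp(⟨η_θ, t_θ(θ)⟩ − log Z_θ(η_θ)). Suppose log Z_θ is twice differentiable at η_θ with ∇ log Z_θ(η_θ) = E_{q(θ)}[t_θ(θ)]. Then the map η_θ ↦ E_{q(θ)q(x)}[log(p(θ)p(x,y|θ)/(q(θ)q(x)))] equals η_θ ↦ ⟨η⁰_θ + s − η_θ, ∇ log Z_θ(η_θ)⟩ − log Z_θ(η⁰_θ) + log Z_θ(η_θ) + C (with C the entropy of q(x), independent of η_θ), and its gradient at η_θ is ∇² log Z_θ(η_θ) · (η⁰_θ + s − η_θ). -/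
open MeasureTheory Filter Real
open scoped RealInnerProductSpace Topology

/-!
Writing `q(θ) = exp(⟪η, t(θ)⟫ − A(η))`, the log-ratio inside the objective is affine in `t(θ)`
and bilinear in `(t(θ), (t_{xy}(x, y), 1))`, so Fubini over the product density turns the
objective into `⟪η⁰ + s − η, E_q[t]⟫ − A(η⁰) + A(η)` plus the entropy of `q(x)`.  With
`E_q[t] = ∇A(η)`, differentiating `⟪c − η, ∇A(η)⟫ + A(η)` the first-order terms cancel and what
remains is `⟪c − η, ∇²A(η) h⟫ = ⟪∇²A(η)(c − η), h⟫`, by symmetry of the Hessian.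
-/

theorem Real.exp_mul_log_exp_mul_exp_div (α β γ : ℝ) {q : ℝ} (hq : 0 ≤ q) :
    exp α * q * log (exp β * exp γ / (exp α * q))
      = exp α * q * (β + γ - α) - exp α * (q * log q) := by
  rcases hq.eq_or_lt with rfl | hq
  · simp
  rw [log_div (by positivity) (by positivity), log_mul (exp_ne_zero _) (exp_ne_zero _),
    log_mul (exp_ne_zero _) hq.ne', log_exp, log_exp, log_exp]
  ring

section Hessian

variable {E : Type*} [NormedAddCommGroup E] [InnerProductSpace ℝ E] [CompleteSpace E]
  {f : E → ℝ} {G : E → E} {H : E →L[ℝ] E} {x : E}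

theorem isSymmetric_of_eventually_hasGradientAt_of_hasFDerivAt
    (hf : ∀ᶠ y in 𝓝 x, HasGradientAt f (G y) y) (hG : HasFDerivAt G H x) :
    (H : E →ₗ[ℝ] E).IsSymmetric := by
  let toDual := (InnerProductSpace.toDual ℝ E).toContinuousLinearEquiv.toContinuousLinearMap
  have hf' : ∀ᶠ y in 𝓝 x, HasFDerivAt f (toDual (G y)) y := by
    filter_upwards [hf] with y hy using hy.hasFDerivAt
  intro v w
  have := second_derivative_symmetric_of_eventually hf' (toDual.hasFDerivAt.comp x hG) v w
  simpa [toDual, InnerProductSpace.toDual_apply_apply, real_inner_comm] using this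

theorem hasGradientAt_inner_sub_gradient_add (c : E)
    (hf : ∀ᶠ y in 𝓝 x, HasGradientAt f (G y) y) (hG : HasFDerivAt G H x) :
    HasGradientAt (fun y => ⟪c - y, G y⟫ + f y) (H (c - x)) x := by
  have hsymm := isSymmetric_of_eventually_hasGradientAt_of_hasFDerivAt hf hG
  rw [hasGradientAt_iff_hasFDerivAt]
  refine ((((hasFDerivAt_id x).const_sub c).inner ℝ hG).add
    hf.self_of_nhds.hasFDerivAt).congr_fderiv ?_
  ext h
  have hH : ⟪c - x, H h⟫ = ⟪H (c - x), h⟫ := (hsymm (c - x) h).symm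
  simp [fderivInnerCLM_apply, InnerProductSpace.toDual_apply_apply, hH, inner_sub_right,
    real_inner_comm]

end Hessian

section MeanField

variable {X Θ E : Type*} [MeasurableSpace X] [MeasurableSpace Θ]
  [NormedAddCommGroup E] [InnerProductSpace ℝ E] {νX : Measure X} {νΘ : Measure Θ}

theorem MeasureTheory.Integrable.inner_prod {F : Θ → E} {H : X → E} (hF : Integrable F νΘ)
    (hH : Integrable H νX) : Integrable (fun z => ⟪F z.1, H z.2⟫) (νΘ.prod νX) :=
  hF.op_fst_snd (by fun_prop)
    ⟨1, fun v w => by simpa using norm_inner_le_norm (𝕜 := ℝ) v w⟩ hH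

variable [CompleteSpace E] [SFinite νX] [SFinite νΘ]

theorem integral_prod_inner {F : Θ → E} {H : X → E} (hF : Integrable F νΘ)
    (hH : Integrable H νX) :
    ∫ z, ⟪F z.1, H z.2⟫ ∂(νΘ.prod νX) = ⟪∫ θ, F θ ∂νΘ, ∫ x, H x ∂νX⟫ := by
  simpa only [innerSL_apply_apply ℝ] using integral_prod_bilin (innerSL ℝ) hF hH

theorem integral_meanField_objective (u : X → E) (t : Θ → E) (η η₀ : E) (a a₀ : ℝ)
    (qx : X → ℝ) (hqx0 : ∀ x, 0 ≤ qx x) (hqx1 : ∫ x, qx x ∂νX = 1)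
    (hqxInt : Integrable qx νX) (hsInt : Integrable (fun x => qx x • u x) νX)
    (hent : Integrable (fun x => qx x * log (qx x)) νX)
    (hqθInt : Integrable (fun θ => exp (⟪η, t θ⟫ - a)) νΘ)
    (hqθ1 : ∫ θ, exp (⟪η, t θ⟫ - a) ∂νΘ = 1)
    (hmeanInt : Integrable (fun θ => exp (⟪η, t θ⟫ - a) • t θ) νΘ) :
    ∫ z : Θ × X, exp (⟪η, t z.1⟫ - a) * qx z.2 *
        log (exp (⟪η₀, t z.1⟫ - a₀) * exp ⟪t z.1, u z.2⟫ /
          (exp (⟪η, t z.1⟫ - a) * qx z.2)) ∂(νΘ.prod νX)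
      = ⟪η₀ + (∫ x, qx x • u x ∂νX) - η, ∫ θ, exp (⟪η, t θ⟫ - a) • t θ ∂νΘ⟫ - a₀ + a
        + (- ∫ x, qx x * log (qx x) ∂νX) := by
  set qθ : Θ → ℝ := fun θ => exp (⟪η, t θ⟫ - a)
  set F : Θ → E := fun θ => qθ θ • t θ
  have hsplit : ∀ z : Θ × X, qθ z.1 * qx z.2 *
        log (exp (⟪η₀, t z.1⟫ - a₀) * exp ⟪t z.1, u z.2⟫ / (qθ z.1 * qx z.2))
      = (⟪η₀ - η, F z.1⟫ + qθ z.1 * (a - a₀)) * qx z.2 + ⟪F z.1, qx z.2 • u z.2⟫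
        - qθ z.1 * (qx z.2 * log (qx z.2)) := by
    intro z
    rw [exp_mul_log_exp_mul_exp_div _ _ _ (hqx0 z.2)]
    simp only [F, real_inner_smul_left, real_inner_smul_right, inner_sub_left]
    ring
  have hI₁ : Integrable (fun θ => ⟪η₀ - η, F θ⟫ + qθ θ * (a - a₀)) νΘ :=
    (hmeanInt.const_inner _).add (hqθInt.mul_const _)
  have hI₂ : Integrable (fun z : Θ × X => ⟪F z.1, qx z.2 • u z.2⟫) (νΘ.prod νX) :=
    hmeanInt.inner_prod hsInt
  rw [integral_congr_ae (ae_of_all _ hsplit),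
    integral_sub ((hI₁.mul_prod hqxInt).fun_add hI₂) (hqθInt.mul_prod hent),
    integral_add (hI₁.mul_prod hqxInt) hI₂,
    integral_prod_mul (fun θ => ⟪η₀ - η, F θ⟫ + qθ θ * (a - a₀)) qx,
    integral_prod_mul qθ (fun x => qx x * log (qx x)), integral_prod_inner hmeanInt hsInt,
    integral_add (hmeanInt.const_inner _) (hqθInt.mul_const _), integral_inner hmeanInt,
    integral_mul_const, hqθ1, hqx1, inner_sub_left, inner_sub_left, inner_add_left,
    real_inner_comm (∫ x, qx x • u x ∂νX)]
  ring

end MeanField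

theorem stmt11_general {X Θ : Type*} [MeasurableSpace X] [MeasurableSpace Θ]
    (νX : Measure X) (νΘ : Measure Θ) [SigmaFinite νX] [SigmaFinite νΘ]
    {n : ℕ}
    (u : X → EuclideanSpace ℝ (Fin (n + 1)))
    (tθ : Θ → EuclideanSpace ℝ (Fin (n + 1)))
    (Zθ : EuclideanSpace ℝ (Fin (n + 1)) → ℝ)
    (η0 : EuclideanSpace ℝ (Fin (n + 1)))
    (qx : X → ℝ) (hqx0 : ∀ x, 0 ≤ qx x) (hqx1 : ∫ x, qx x ∂νX = 1)
    (hqxInt : Integrable qx νX)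
    (hsInt : Integrable (fun x => qx x • u x) νX)
    (s : EuclideanSpace ℝ (Fin (n + 1))) (hs : s = ∫ x, qx x • u x ∂νX)
    (hent : Integrable (fun x => qx x * Real.log (qx x)) νX)
    (L : EuclideanSpace ℝ (Fin (n + 1)) → ℝ)
    (hL : ∀ η, L η = ∫ pr : Θ × X,
        Real.exp (⟪η, tθ pr.1⟫ - Real.log (Zθ η)) * qx pr.2 *
          Real.log (Real.exp (⟪η0, tθ pr.1⟫ - Real.log (Zθ η0)) *
              Real.exp ⟪tθ pr.1, u pr.2⟫ /
            (Real.exp (⟪η, tθ pr.1⟫ - Real.log (Zθ η)) * qx pr.2)) ∂(νΘ.prod νX))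
    (ηθ : EuclideanSpace ℝ (Fin (n + 1)))
    (G : EuclideanSpace ℝ (Fin (n + 1)) → EuclideanSpace ℝ (Fin (n + 1)))
    (hG : ∀ᶠ η in nhds ηθ, HasGradientAt (fun η' => Real.log (Zθ η')) (G η) η)
    (hGmeanInt : ∀ᶠ η in nhds ηθ,
        Integrable (fun θ => Real.exp (⟪η, tθ θ⟫ - Real.log (Zθ η)) • tθ θ) νΘ)
    (hGmean : ∀ᶠ η in nhds ηθ,
        G η = ∫ θ, Real.exp (⟪η, tθ θ⟫ - Real.log (Zθ η)) • tθ θ ∂νΘ)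
    (hqθInt : ∀ᶠ η in nhds ηθ,
        Integrable (fun θ => Real.exp (⟪η, tθ θ⟫ - Real.log (Zθ η))) νΘ)
    (hnorm : ∀ᶠ η in nhds ηθ,
        ∫ θ, Real.exp (⟪η, tθ θ⟫ - Real.log (Zθ η)) ∂νΘ = 1)
    (Hess : EuclideanSpace ℝ (Fin (n + 1)) →L[ℝ] EuclideanSpace ℝ (Fin (n + 1)))
    (hHess : HasFDerivAt G Hess ηθ) :
    (∀ᶠ η in nhds ηθ,
        L η = ⟪η0 + s - η, G η⟫ - Real.log (Zθ η0) + Real.log (Zθ η)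
          + (- ∫ x, qx x * Real.log (qx x) ∂νX))
    ∧ HasGradientAt L (Hess (η0 + s - ηθ)) ηθ := by
  have hobj : ∀ᶠ η in nhds ηθ,
      L η = ⟪η0 + s - η, G η⟫ - Real.log (Zθ η0) + Real.log (Zθ η)
        + (- ∫ x, qx x * Real.log (qx x) ∂νX) := by
    filter_upwards [hGmeanInt, hGmean, hqθInt, hnorm] with η hmeanInt hmean hqInt hq1
    rw [hL, integral_meanField_objective u tθ η η0 _ _ qx hqx0 hqx1 hqxInt hsInt hent hqInt hq1
      hmeanInt, ← hs, ← hmean]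
  refine ⟨hobj, ?_⟩
  have hgrad := hasGradientAt_iff_hasFDerivAt.mpr
    ((hasGradientAt_inner_sub_gradient_add (η0 + s) hG hHess).hasFDerivAt.add_const
      (-Real.log (Zθ η0) + -∫ x, qx x * Real.log (qx x) ∂νX))
  refine hgrad.congr_of_eventuallyEq ?_
  filter_upwards [hobj] with η hη
  rw [hη]
  ring

/-- **The SVI objective and its gradient in the conjugate global parameter.**
Let `p(x, y|θ) = exp⟪t_θ(θ), (t_{xy}(x,y), 1)⟫` be an exponential family likelihood
with conjugate prior `p(θ) = exp(⟪η⁰_θ, t_θ(θ)⟫ − log Z_θ(η⁰_θ))`; fix data `y`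
(so `u x = (t_{xy}(x, y), 1) ∈ ℝ^{n+1}`, with last coordinate `1`), fix a probability
density `q(x)` with `s = E_{q(x)}[u]` finite, and parameterize
`q(θ) = exp(⟪η_θ, t_θ(θ)⟫ − log Z_θ(η_θ))`.  Suppose `log Z_θ` is differentiable near
`η_θ` and twice differentiable at `η_θ`, with `∇ log Z_θ = E_{q(θ)}[t_θ(θ)]` (the
expected statistic) near `η_θ`, and that the objective is well defined (normalized
factors and integrable integrands) near `η_θ`.  Then the mean field objective
`L(η) = E_{q(θ)q(x)}[log (p(θ)p(x,y|θ)/(q(θ)q(x)))]` satisfies, near `η_θ`,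
`L(η) = ⟪η⁰_θ + s − η, ∇log Z_θ(η)⟫ − log Z_θ(η⁰_θ) + log Z_θ(η) + C` with
`C = −∫ q(x) log q(x)` the entropy of `q(x)` (independent of `η`), and its gradient
at `η_θ` is `∇² log Z_θ(η_θ) · (η⁰_θ + s − η_θ)`. -/
theorem stmt11 {X Θ : Type*} [MeasurableSpace X] [MeasurableSpace Θ]
    (νX : Measure X) (νΘ : Measure Θ) [SigmaFinite νX] [SigmaFinite νΘ]
    {n : ℕ}
    (u : X → EuclideanSpace ℝ (Fin (n + 1)))
    (hu : ∀ x, u x (Fin.last n) = 1)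
    (tθ : Θ → EuclideanSpace ℝ (Fin (n + 1)))
    (Zθ : EuclideanSpace ℝ (Fin (n + 1)) → ℝ)
    (hZθ : ∀ η, Zθ η = ∫ θ, Real.exp ⟪η, tθ θ⟫ ∂νΘ)
    (η0 : EuclideanSpace ℝ (Fin (n + 1)))
    (qx : X → ℝ) (hqx0 : ∀ x, 0 ≤ qx x) (hqx1 : ∫ x, qx x ∂νX = 1)
    (hqxInt : Integrable qx νX)
    (hsInt : Integrable (fun x => qx x • u x) νX)
    (s : EuclideanSpace ℝ (Fin (n + 1))) (hs : s = ∫ x, qx x • u x ∂νX)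
    (hent : Integrable (fun x => qx x * Real.log (qx x)) νX)
    (L : EuclideanSpace ℝ (Fin (n + 1)) → ℝ)
    (hL : ∀ η, L η = ∫ pr : Θ × X,
        Real.exp (⟪η, tθ pr.1⟫ - Real.log (Zθ η)) * qx pr.2 *
          Real.log (Real.exp (⟪η0, tθ pr.1⟫ - Real.log (Zθ η0)) *
              Real.exp ⟪tθ pr.1, u pr.2⟫ /
            (Real.exp (⟪η, tθ pr.1⟫ - Real.log (Zθ η)) * qx pr.2)) ∂(νΘ.prod νX))
    (ηθ : EuclideanSpace ℝ (Fin (n + 1)))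
    (G : EuclideanSpace ℝ (Fin (n + 1)) → EuclideanSpace ℝ (Fin (n + 1)))
    (hG : ∀ᶠ η in nhds ηθ, HasGradientAt (fun η' => Real.log (Zθ η')) (G η) η)
    (hGmeanInt : ∀ᶠ η in nhds ηθ,
        Integrable (fun θ => Real.exp (⟪η, tθ θ⟫ - Real.log (Zθ η)) • tθ θ) νΘ)
    (hGmean : ∀ᶠ η in nhds ηθ,
        G η = ∫ θ, Real.exp (⟪η, tθ θ⟫ - Real.log (Zθ η)) • tθ θ ∂νΘ)
    (hqθInt : ∀ᶠ η in nhds ηθ,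
        Integrable (fun θ => Real.exp (⟪η, tθ θ⟫ - Real.log (Zθ η))) νΘ)
    (hnorm : ∀ᶠ η in nhds ηθ,
        ∫ θ, Real.exp (⟪η, tθ θ⟫ - Real.log (Zθ η)) ∂νΘ = 1)
    (hfub : ∀ᶠ η in nhds ηθ, Integrable (fun pr : Θ × X =>
        Real.exp (⟪η, tθ pr.1⟫ - Real.log (Zθ η)) * qx pr.2 *
          Real.log (Real.exp (⟪η0, tθ pr.1⟫ - Real.log (Zθ η0)) *
              Real.exp ⟪tθ pr.1, u pr.2⟫ /
            (Real.exp (⟪η, tθ pr.1⟫ - Real.log (Zθ η)) * qx pr.2))) (νΘ.prod νX))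
    (Hess : EuclideanSpace ℝ (Fin (n + 1)) →L[ℝ] EuclideanSpace ℝ (Fin (n + 1)))
    (hHess : HasFDerivAt G Hess ηθ) :
    (∀ᶠ η in nhds ηθ,
        L η = ⟪η0 + s - η, G η⟫ - Real.log (Zθ η0) + Real.log (Zθ η)
          + (- ∫ x, qx x * Real.log (qx x) ∂νX))
    ∧ HasGradientAt L (Hess (η0 + s - ηθ)) ηθ :=
  stmt11_general νX νΘ u tθ Zθ η0 qx hqx0 hqx1 hqxInt hsInt s hs hent L hL ηθ G hG hGmeanInt hGmean
    hqθInt hnorm Hess hHess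
end

section
/- Under the hypotheses of the SVI gradient computation — p(x,y|θ) = exp⟨t_θ(θ), (t_{xy}(x,y),1)⟩ an exponential family likelihood with conjugate prior p(θ) having statistic t_θ and log partition function log Z_θ, fixed data y, fixed density q(x) with s = E_{q(x)}[(t_{xy}(x,y), 1)] finite, q(θ) in the prior's family with natural parameter η_θ, log Z_θ twice differentiable at η_θ with ∇ log Z_θ(η_θ) = E_{q(θ)}[t_θ(θ)], and additionally ∇² log Z_θ(η_θ) invertible — the natural gradient of the SVI objective L(η_θ) = E_{q(θ)q(x)}[log(p(θ)p(x,y|θ)/(q(θ)q(x)))], defined as (∇² log Z_θ(η_θ))⁻¹ ∇L(η_θ), equals η⁰_θ + E_{q(x)}[(t_{xy}(x, y), 1)] − η_θ. -/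
open MeasureTheory Filter Topology
open scoped RealInnerProductSpace

/-!
Because `q(θ)` lies in the conjugate family, `E_{q(θ)}[t_θ] = ∇ log Z_θ(η)`, and the objective
collapses to `L(η) = ⟪η⁰ + s - η, ∇ log Z_θ(η)⟫ + log Z_θ(η) - const`. Differentiating, the two
`∇ log Z_θ(η)` terms cancel and, the Hessian being symmetric, what is left is
`∇L(η) = ∇² log Z_θ(η) (η⁰ + s - η)`; the inverse Hessian then returns `η⁰ + s - η`.
-/

theorem Real.exp_mul_mul_log_exp_mul_exp_div (a b d q : ℝ) :
    Real.exp a * q * Real.log (Real.exp b * Real.exp d / (Real.exp a * q)) =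
      Real.exp a * q * (b + d - a) - Real.exp a * (q * Real.log q) := by
  rcases eq_or_ne q 0 with rfl | hq
  · simp
  · rw [Real.log_div (by positivity) (by positivity), Real.log_mul (by positivity) (by positivity),
      Real.log_mul (by positivity) hq, Real.log_exp, Real.log_exp, Real.log_exp]
    ring

section Integral

variable {α β E : Type*} [MeasurableSpace α] [MeasurableSpace β] {μ : Measure α} {ν : Measure β}
  [NormedAddCommGroup E] [InnerProductSpace ℝ E] {f : α → E} {g : β → E}

theorem MeasureTheory.Integrable.inner_prod_s12 (hf : Integrable f μ) (hg : Integrable g ν) :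
    Integrable (fun z : α × β => ⟪f z.1, g z.2⟫) (μ.prod ν) :=
  hf.op_fst_snd (continuous_inner (𝕜 := ℝ))
    ⟨1, fun x y => by simpa using norm_inner_le_norm (𝕜 := ℝ) x y⟩ hg

theorem integral_prod_inner_s12 [CompleteSpace E] [SFinite μ] [SFinite ν] (hf : Integrable f μ)
    (hg : Integrable g ν) :
    ∫ z, ⟪f z.1, g z.2⟫ ∂μ.prod ν = ⟪∫ x, f x ∂μ, ∫ y, g y ∂ν⟫ :=
  integral_prod_bilin (innerSL ℝ) hf hg

theorem integral_prod_density_affine_inner [CompleteSpace E] [SFinite μ] [SFinite ν] {p : α → ℝ}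
    {q h : β → ℝ} {t : α → E} {u : β → E} (hp : Integrable p μ) (hp1 : ∫ x, p x ∂μ = 1)
    (hpt : Integrable (fun x => p x • t x) μ) (hq : Integrable q ν) (hq1 : ∫ y, q y ∂ν = 1)
    (hqu : Integrable (fun y => q y • u y) ν) (hh : Integrable h ν) (a : E) (c : ℝ) :
    ∫ z, p z.1 * q z.2 * (⟪a, t z.1⟫ + ⟪t z.1, u z.2⟫ + c) - p z.1 * h z.2 ∂μ.prod ν =
      ⟪a + ∫ y, q y • u y ∂ν, ∫ x, p x • t x ∂μ⟫ + c - ∫ y, h y ∂ν := by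
  have hqau : Integrable (fun y => q y • (a + u y)) ν := by
    simp only [smul_add]
    exact (hq.smul_const a).add hqu
  have hqch : Integrable (fun y => q y * c - h y) ν := (hq.mul_const c).sub hh
  have hsplit : ∀ z : α × β, p z.1 * q z.2 * (⟪a, t z.1⟫ + ⟪t z.1, u z.2⟫ + c) - p z.1 * h z.2 =
      ⟪p z.1 • t z.1, q z.2 • (a + u z.2)⟫ + p z.1 * (q z.2 * c - h z.2) := by
    intro z
    rw [real_inner_smul_left, real_inner_smul_right, inner_add_right, real_inner_comm a]
    ring
  rw [integral_congr_ae (.of_forall hsplit),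
    integral_add (hpt.inner_prod_s12 hqau) (hp.mul_prod hqch),
    integral_prod_inner_s12 hpt hqau, integral_prod_mul p (fun y => q y * c - h y), hp1, one_mul,
    integral_sub (hq.mul_const c) hh, integral_mul_const, hq1, one_mul]
  simp only [smul_add]
  rw [integral_add (hq.smul_const a) hqu, integral_smul_const, hq1, one_smul, real_inner_comm]
  ring

end Integral

section Hessian

variable {E : Type*} [NormedAddCommGroup E] [InnerProductSpace ℝ E] [CompleteSpace E]
  {A : E → ℝ} {G : E → E} {H : E →L[ℝ] E} {x : E}

theorem inner_hessian_comm (hA : ∀ᶠ y in 𝓝 x, HasGradientAt A (G y) y)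
    (hG : HasFDerivAt G H x) (v w : E) : ⟪H v, w⟫ = ⟪H w, v⟫ := by
  let B : E →L[ℝ] E →L[ℝ] ℝ := innerSL ℝ
  have hA' : ∀ᶠ y in 𝓝 x, HasFDerivAt A (B (G y)) y := by
    filter_upwards [hA] with y hy using hy.hasFDerivAt
  exact second_derivative_symmetric_of_eventually hA' (B.hasFDerivAt.comp x hG) v w

theorem hasGradientAt_inner_sub_gradient_add_sub_const
    (hA : ∀ᶠ y in 𝓝 x, HasGradientAt A (G y) y) (hG : HasFDerivAt G H x) (b : E) (c : ℝ) :
    HasGradientAt (fun y => ⟪b - y, G y⟫ + A y - c) (H (b - x)) x := by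
  rw [hasGradientAt_iff_hasFDerivAt]
  refine (((((hasFDerivAt_id x).const_sub b).inner ℝ hG).add
    hA.self_of_nhds.hasFDerivAt).sub_const c).congr_fderiv ?_
  ext v
  simp only [add_apply, ContinuousLinearMap.comp_apply,
    ContinuousLinearMap.prod_apply, neg_apply, ContinuousLinearMap.id_apply,
    fderivInnerCLM_apply, id_eq, InnerProductSpace.toDual_apply_apply, inner_neg_left]
  rw [real_inner_comm, inner_hessian_comm hA hG, real_inner_comm (G x)]
  ring

end Hessian

theorem stmt12_general {X Θ : Type*} [MeasurableSpace X] [MeasurableSpace Θ]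
    (νX : Measure X) (νΘ : Measure Θ) [SigmaFinite νX] [SigmaFinite νΘ]
    {n : ℕ}
    (u : X → EuclideanSpace ℝ (Fin (n + 1)))
    (tθ : Θ → EuclideanSpace ℝ (Fin (n + 1)))
    (Zθ : EuclideanSpace ℝ (Fin (n + 1)) → ℝ)
    (η0 : EuclideanSpace ℝ (Fin (n + 1)))
    (qx : X → ℝ) (hqx1 : ∫ x, qx x ∂νX = 1)
    (hqxInt : Integrable qx νX)
    (hsInt : Integrable (fun x => qx x • u x) νX)
    (s : EuclideanSpace ℝ (Fin (n + 1))) (hs : s = ∫ x, qx x • u x ∂νX)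
    (hent : Integrable (fun x => qx x * Real.log (qx x)) νX)
    (L : EuclideanSpace ℝ (Fin (n + 1)) → ℝ)
    (hL : ∀ η, L η = ∫ pr : Θ × X,
        Real.exp (⟪η, tθ pr.1⟫ - Real.log (Zθ η)) * qx pr.2 *
          Real.log (Real.exp (⟪η0, tθ pr.1⟫ - Real.log (Zθ η0)) *
              Real.exp ⟪tθ pr.1, u pr.2⟫ /
            (Real.exp (⟪η, tθ pr.1⟫ - Real.log (Zθ η)) * qx pr.2)) ∂(νΘ.prod νX))
    (ηθ : EuclideanSpace ℝ (Fin (n + 1)))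
    (G : EuclideanSpace ℝ (Fin (n + 1)) → EuclideanSpace ℝ (Fin (n + 1)))
    (hG : ∀ᶠ η in nhds ηθ, HasGradientAt (fun η' => Real.log (Zθ η')) (G η) η)
    (hGmeanInt : ∀ᶠ η in nhds ηθ,
        Integrable (fun θ => Real.exp (⟪η, tθ θ⟫ - Real.log (Zθ η)) • tθ θ) νΘ)
    (hGmean : ∀ᶠ η in nhds ηθ,
        G η = ∫ θ, Real.exp (⟪η, tθ θ⟫ - Real.log (Zθ η)) • tθ θ ∂νΘ)
    (hqθInt : ∀ᶠ η in nhds ηθ,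
        Integrable (fun θ => Real.exp (⟪η, tθ θ⟫ - Real.log (Zθ η))) νΘ)
    (hnorm : ∀ᶠ η in nhds ηθ,
        ∫ θ, Real.exp (⟪η, tθ θ⟫ - Real.log (Zθ η)) ∂νΘ = 1)
    (Hess : EuclideanSpace ℝ (Fin (n + 1)) →L[ℝ] EuclideanSpace ℝ (Fin (n + 1)))
    (hHess : HasFDerivAt G Hess ηθ) :
    ∀ Hinv : EuclideanSpace ℝ (Fin (n + 1)) →L[ℝ] EuclideanSpace ℝ (Fin (n + 1)),
      (∀ v, Hinv (Hess v) = v) → (∀ v, Hess (Hinv v) = v) →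
      Hinv (gradient L ηθ) = η0 + s - ηθ := by
  intro Hinv hHinvHess _
  have hLeq : ∀ᶠ η in nhds ηθ, L η = ⟪η0 + s - η, G η⟫ + Real.log (Zθ η) -
      (Real.log (Zθ η0) + ∫ x, qx x * Real.log (qx x) ∂νX) := by
    filter_upwards [hGmeanInt, hGmean, hqθInt, hnorm] with η hpt hm hp hp1
    have hintegrand : ∀ z : Θ × X,
        Real.exp (⟪η, tθ z.1⟫ - Real.log (Zθ η)) * qx z.2 *
          Real.log (Real.exp (⟪η0, tθ z.1⟫ - Real.log (Zθ η0)) * Real.exp ⟪tθ z.1, u z.2⟫ /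
            (Real.exp (⟪η, tθ z.1⟫ - Real.log (Zθ η)) * qx z.2)) =
        Real.exp (⟪η, tθ z.1⟫ - Real.log (Zθ η)) * qx z.2 *
            (⟪η0 - η, tθ z.1⟫ + ⟪tθ z.1, u z.2⟫ + (Real.log (Zθ η) - Real.log (Zθ η0))) -
          Real.exp (⟪η, tθ z.1⟫ - Real.log (Zθ η)) * (qx z.2 * Real.log (qx z.2)) := by
      intro z
      rw [Real.exp_mul_mul_log_exp_mul_exp_div, inner_sub_left]
      ring
    rw [hL, integral_congr_ae (.of_forall hintegrand),
      integral_prod_density_affine_inner hp hp1 hpt hqxInt hqx1 hsInt hent, ← hs, ← hm,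
      sub_add_eq_add_sub]
    ring
  have hgrad : HasGradientAt L (Hess (η0 + s - ηθ)) ηθ :=
    (hasGradientAt_inner_sub_gradient_add_sub_const hG hHess _ _).congr_of_eventuallyEq hLeq
  rw [hgrad.gradient, hHinvHess]

/-- **Natural gradient of the SVI objective.**
Under the hypotheses of the SVI gradient computation — `p(x,y|θ)` an exponential family
likelihood with conjugate prior with statistic `t_θ` and log partition function
`log Z_θ`, fixed data `y` (`u x = (t_{xy}(x,y), 1)`), fixed density `q(x)` with
`s = E_{q(x)}[u]` finite, `q(θ)` in the prior's family with natural parameter `η_θ`,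
`log Z_θ` twice differentiable at `η_θ` with `∇ log Z_θ = E_{q(θ)}[t_θ(θ)]`, and
additionally `∇² log Z_θ(η_θ)` invertible (with inverse `Hinv`) — the natural gradient
of the SVI objective `L`, namely `(∇² log Z_θ(η_θ))⁻¹ ∇L(η_θ)`, equals
`η⁰_θ + E_{q(x)}[(t_{xy}(x, y), 1)] − η_θ`. -/
theorem stmt12 {X Θ : Type*} [MeasurableSpace X] [MeasurableSpace Θ]
    (νX : Measure X) (νΘ : Measure Θ) [SigmaFinite νX] [SigmaFinite νΘ]
    {n : ℕ}
    (u : X → EuclideanSpace ℝ (Fin (n + 1)))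
    (hu : ∀ x, u x (Fin.last n) = 1)
    (tθ : Θ → EuclideanSpace ℝ (Fin (n + 1)))
    (Zθ : EuclideanSpace ℝ (Fin (n + 1)) → ℝ)
    (hZθ : ∀ η, Zθ η = ∫ θ, Real.exp ⟪η, tθ θ⟫ ∂νΘ)
    (η0 : EuclideanSpace ℝ (Fin (n + 1)))
    (qx : X → ℝ) (hqx0 : ∀ x, 0 ≤ qx x) (hqx1 : ∫ x, qx x ∂νX = 1)
    (hqxInt : Integrable qx νX)
    (hsInt : Integrable (fun x => qx x • u x) νX)
    (s : EuclideanSpace ℝ (Fin (n + 1))) (hs : s = ∫ x, qx x • u x ∂νX)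
    (hent : Integrable (fun x => qx x * Real.log (qx x)) νX)
    (L : EuclideanSpace ℝ (Fin (n + 1)) → ℝ)
    (hL : ∀ η, L η = ∫ pr : Θ × X,
        Real.exp (⟪η, tθ pr.1⟫ - Real.log (Zθ η)) * qx pr.2 *
          Real.log (Real.exp (⟪η0, tθ pr.1⟫ - Real.log (Zθ η0)) *
              Real.exp ⟪tθ pr.1, u pr.2⟫ /
            (Real.exp (⟪η, tθ pr.1⟫ - Real.log (Zθ η)) * qx pr.2)) ∂(νΘ.prod νX))
    (ηθ : EuclideanSpace ℝ (Fin (n + 1)))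
    (G : EuclideanSpace ℝ (Fin (n + 1)) → EuclideanSpace ℝ (Fin (n + 1)))
    (hG : ∀ᶠ η in nhds ηθ, HasGradientAt (fun η' => Real.log (Zθ η')) (G η) η)
    (hGmeanInt : ∀ᶠ η in nhds ηθ,
        Integrable (fun θ => Real.exp (⟪η, tθ θ⟫ - Real.log (Zθ η)) • tθ θ) νΘ)
    (hGmean : ∀ᶠ η in nhds ηθ,
        G η = ∫ θ, Real.exp (⟪η, tθ θ⟫ - Real.log (Zθ η)) • tθ θ ∂νΘ)
    (hqθInt : ∀ᶠ η in nhds ηθ,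
        Integrable (fun θ => Real.exp (⟪η, tθ θ⟫ - Real.log (Zθ η))) νΘ)
    (hnorm : ∀ᶠ η in nhds ηθ,
        ∫ θ, Real.exp (⟪η, tθ θ⟫ - Real.log (Zθ η)) ∂νΘ = 1)
    (hfub : ∀ᶠ η in nhds ηθ, Integrable (fun pr : Θ × X =>
        Real.exp (⟪η, tθ pr.1⟫ - Real.log (Zθ η)) * qx pr.2 *
          Real.log (Real.exp (⟪η0, tθ pr.1⟫ - Real.log (Zθ η0)) *
              Real.exp ⟪tθ pr.1, u pr.2⟫ /
            (Real.exp (⟪η, tθ pr.1⟫ - Real.log (Zθ η)) * qx pr.2))) (νΘ.prod νX))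
    (Hess : EuclideanSpace ℝ (Fin (n + 1)) →L[ℝ] EuclideanSpace ℝ (Fin (n + 1)))
    (hHess : HasFDerivAt G Hess ηθ) :
    ∀ Hinv : EuclideanSpace ℝ (Fin (n + 1)) →L[ℝ] EuclideanSpace ℝ (Fin (n + 1)),
      (∀ v, Hinv (Hess v) = v) → (∀ v, Hess (Hinv v) = v) →
      Hinv (gradient L ηθ) = η0 + s - ηθ :=
  stmt12_general νX νΘ u tθ Zθ η0 qx hqx1 hqxInt hsInt s hs hent L hL ηθ G hG hGmeanInt hGmean
    hqθInt hnorm Hess hHess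
end

section
/- Let log Z_θ : ℝ^{n+1} → ℝ be twice differentiable, let Π : ℝ^{n+1} → ℝ^n be the projection onto the first n coordinates, let r ∈ ℝ^n, and define η*_x(η_θ) = Π(∇ log Z_θ(η_θ)) + r (the optimal local variational parameter, equal to the expected prior natural parameter E_{q(θ)}[η⁰_x(θ)] plus the recognition potential r, since E_{q(θ)}[t_θ(θ)] = ∇ log Z_θ(η_θ) and η⁰_x(θ) consists of the first n coordinates of t_θ(θ)). Let L(η_θ, η_x) be differentiable, suppose η_θ ↦ L(η_θ, η_x) has gradient ∇_{η_θ} L(η_θ, η*_x(η_θ)) = ∇² log Z_θ(η_θ) · g(η_θ) for some g(η_θ) ∈ ℝ^{n+1} (the SVI-form partial gradient), and let h(η_θ) = ∇_{η_x} L(η_θ, η*_x(η_θ)) ∈ ℝ^n. Then the gradient of the composite objective G(η_θ) = L(η_θ, η*_x(η_θ)) is ∇G(η_θ) = ∇² log Z_θ(η_θ) · (g(η_θ) + (h(η_θ), 0)); consequently, if ∇² log Z_θ(η_θ) is invertible, the natural gradient (∇² log Z_θ(η_θ))⁻¹ ∇G(η_θ) equals g(η_θ) + (h(η_θ), 0),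 where (h, 0) ∈ ℝ^{n+1} denotes h padded with a final zero coordinate. -/
open scoped RealInnerProductSpace

/-! By the chain rule, `∇G = ∇_{η_θ} L + (D η*_x)† ∇_{η_x} L` with `D η*_x = Π ∘ ∇² log Z_θ`.
The Hessian is self-adjoint (symmetry of second derivatives) and `Π†` pads a vector with a final
zero, so the second term is `∇² log Z_θ (h, 0)`. -/

open InnerProductSpace ContinuousLinearMap

section Gradient

variable {E F : Type*} [NormedAddCommGroup E] [InnerProductSpace ℝ E] [CompleteSpace E]
  [NormedAddCommGroup F] [InnerProductSpace ℝ F] [CompleteSpace F]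

theorem isSelfAdjoint_of_hasFDerivAt_gradient {f : E → ℝ} {f' : E → E} {H : E →L[ℝ] E} {x : E}
    (hf : ∀ y, HasGradientAt f (f' y) y) (hH : HasFDerivAt f' H x) : IsSelfAdjoint H := by
  have hD : HasFDerivAt (fun y => innerSL ℝ (f' y)) (innerSL ℝ ∘L H) x :=
    (innerSL ℝ).hasFDerivAt.comp x hH
  refine isSelfAdjoint_iff_isSymmetric.mpr fun v w => ?_
  have hsymm := second_derivative_symmetric (fun y => (hf y).hasFDerivAt) hD w v
  change ⟪H w, v⟫ = ⟪H v, w⟫ at hsymm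
  change ⟪H v, w⟫ = ⟪v, H w⟫
  rw [← hsymm, real_inner_comm]

theorem hasGradientAt_comp_prodMk {L : E × F → ℝ} {φ : E → F} {φ' : E →L[ℝ] F} {x : E}
    (hL : DifferentiableAt ℝ L (x, φ x)) (hφ : HasFDerivAt φ φ' x) :
    HasGradientAt (fun y => L (y, φ y))
      (gradient (fun y => L (y, φ x)) x + adjoint φ' (gradient (fun z => L (x, z)) (φ x))) x := by
  set L' := fderiv ℝ L (x, φ x)
  have hL' : HasFDerivAt L L' (x, φ x) := hL.hasFDerivAt
  have h₁ : HasFDerivAt (fun y => L (y, φ x)) (L' ∘L inl ℝ E F) x :=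
    hL'.comp x (hasFDerivAt_prodMk_left x (φ x))
  have h₂ : HasFDerivAt (fun z => L (x, z)) (L' ∘L inr ℝ E F) (φ x) :=
    hL'.comp (φ x) (hasFDerivAt_prodMk_right x (φ x))
  refine (hL'.comp x ((hasFDerivAt_id x).prodMk hφ)).congr_fderiv ?_
  ext v
  simp only [toDual_apply_apply, inner_add_left, adjoint_inner_left, gradient, toDual_symm_apply,
    h₁.fderiv, h₂.fderiv, comp_apply, inl_apply, inr_apply, ← map_add, prod_apply, coe_id', id_eq,
    Prod.mk_add_mk, add_zero, zero_add]

end Gradient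

namespace EuclideanSpace

variable (𝕜 : Type*) [RCLike 𝕜]

noncomputable def truncLast (n : ℕ) :
    EuclideanSpace 𝕜 (Fin (n + 1)) →L[𝕜] EuclideanSpace 𝕜 (Fin n) :=
  LinearMap.toContinuousLinearMap
    { toFun := fun w => WithLp.toLp 2 fun i => w i.castSucc
      map_add' := fun _ _ => rfl
      map_smul' := fun _ _ => rfl }

variable {𝕜}

@[simp]
theorem truncLast_apply {n : ℕ} (w : EuclideanSpace 𝕜 (Fin (n + 1))) (i : Fin n) :
    truncLast 𝕜 n w i = w i.castSucc :=
  rfl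

theorem adjoint_truncLast_apply {n : ℕ} (h : EuclideanSpace 𝕜 (Fin n)) :
    adjoint (truncLast 𝕜 n) h = WithLp.toLp 2 (Fin.snoc (WithLp.ofLp h) 0) := by
  refine ext_inner_right 𝕜 fun w => ?_
  rw [adjoint_inner_left]
  simp [PiLp.inner_apply, Fin.sum_univ_castSucc]

end EuclideanSpace

/-- **Natural gradient of the composite SVAE objective.**
Let `log Z_θ : ℝ^{n+1} → ℝ` be twice differentiable (gradient `Gz` everywhere,
`∇² log Z_θ(η_θ) = Hess` at `η_θ`), let `Π : ℝ^{n+1} → ℝⁿ` be the projection onto the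
first `n` coordinates, let `r ∈ ℝⁿ`, and define
`η*_x(η) = Π(∇ log Z_θ(η)) + r` (the optimal local variational parameter: the expected
prior natural parameter plus the recognition potential).  Let `L : ℝ^{n+1} × ℝⁿ → ℝ`
be differentiable at `(η_θ, η*_x(η_θ))`, suppose the partial gradient in the first
argument is `∇_{η_θ} L(η_θ, η*_x(η_θ)) = ∇² log Z_θ(η_θ) · g` (the SVI-form partial
gradient), and let `h = ∇_{η_x} L(η_θ, η*_x(η_θ))`.  Then the composite objective
`G(η) = L(η, η*_x(η))` has gradient `∇G(η_θ) = ∇² log Z_θ(η_θ) · (g + (h, 0))` at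
`η_θ`, where `(h, 0)` is `h` padded with a final zero coordinate; consequently, if
`∇² log Z_θ(η_θ)` is invertible (with inverse `Hinv`), the natural gradient
`(∇² log Z_θ(η_θ))⁻¹ ∇G(η_θ)` equals `g + (h, 0)`. -/
theorem stmt18 {n : ℕ}
    (logZθ : EuclideanSpace ℝ (Fin (n + 1)) → ℝ)
    (Gz : EuclideanSpace ℝ (Fin (n + 1)) → EuclideanSpace ℝ (Fin (n + 1)))
    (hGz : ∀ η, HasGradientAt logZθ (Gz η) η)
    (Hess : EuclideanSpace ℝ (Fin (n + 1)) →L[ℝ] EuclideanSpace ℝ (Fin (n + 1)))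
    (ηθ : EuclideanSpace ℝ (Fin (n + 1)))
    (hHess : HasFDerivAt Gz Hess ηθ)
    (r : EuclideanSpace ℝ (Fin n))
    (ηstarx : EuclideanSpace ℝ (Fin (n + 1)) → EuclideanSpace ℝ (Fin n))
    (hηstarx : ∀ η, ηstarx η =
      (show EuclideanSpace ℝ (Fin n) from WithLp.toLp 2 (fun i : Fin n => Gz η i.castSucc)) + r)
    (L : EuclideanSpace ℝ (Fin (n + 1)) × EuclideanSpace ℝ (Fin n) → ℝ)
    (hL : DifferentiableAt ℝ L (ηθ, ηstarx ηθ))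
    (g : EuclideanSpace ℝ (Fin (n + 1)))
    (hg : gradient (fun η => L (η, ηstarx ηθ)) ηθ = Hess g)
    (h : EuclideanSpace ℝ (Fin n))
    (hh : h = gradient (fun ξ => L (ηθ, ξ)) (ηstarx ηθ)) :
    HasGradientAt (fun η => L (η, ηstarx η))
      (Hess (g + (show EuclideanSpace ℝ (Fin (n + 1)) from WithLp.toLp 2 (Fin.snoc (WithLp.ofLp h) 0 : Fin (n + 1) → ℝ)))) ηθ
    ∧ ∀ Hinv : EuclideanSpace ℝ (Fin (n + 1)) →L[ℝ] EuclideanSpace ℝ (Fin (n + 1)),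
        (∀ v, Hinv (Hess v) = v) → (∀ v, Hess (Hinv v) = v) →
        Hinv (gradient (fun η => L (η, ηstarx η)) ηθ)
          = g + (show EuclideanSpace ℝ (Fin (n + 1)) from WithLp.toLp 2 (Fin.snoc (WithLp.ofLp h) 0 : Fin (n + 1) → ℝ)) := by
  have hHess_selfAdjoint : IsSelfAdjoint Hess := isSelfAdjoint_of_hasFDerivAt_gradient hGz hHess
  have hstar : HasFDerivAt ηstarx (EuclideanSpace.truncLast ℝ n ∘L Hess) ηθ := by
    rw [show ηstarx = fun η => EuclideanSpace.truncLast ℝ n (Gz η) + r from funext hηstarx]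
    exact ((EuclideanSpace.truncLast ℝ n).hasFDerivAt.comp ηθ hHess).add_const r
  have hG := hasGradientAt_comp_prodMk hL hstar
  rw [hg, ← hh, adjoint_comp, hHess_selfAdjoint.adjoint_eq, comp_apply,
    EuclideanSpace.adjoint_truncLast_apply, ← map_add] at hG
  exact ⟨hG, fun Hinv hinv _ => by rw [hG.gradient, hinv]⟩
end
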